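/- arXiv:2208.00228 — 3 statements merged into one kernel-verified Lean document; each statement's English description precedes it below -/
import Mathlib

section
/- There exist a finite set Λ_b ⊂ 𝕊² ∩ ℚ³, for each k ∈ Λ_b an orthonormal basis (k, k̄, k̄̄) of ℝ³, a constant ε_b > 0, and smooth positive functions a_{b,k} : B_{ε_b}(0) → ℝ defined on the ball of radius ε_b centered at the zero matrix in the space of real 3×3 skew-symmetric matrices, such that for every skew-symmetric matrix M_b ∈ B_{ε_b}(0): M_b = Σ_{k∈Λ_b} a_{b,k}(M_b) (k̄⊗k̄̄ − k̄̄⊗k̄). -/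
open MeasureTheory Real Set ENNReal

noncomputable section

abbrev V3 := Fin 3 → ℝ

/-- `3 × 3` real matrices (as plain functions, carrying the sup norm). -/
abbrev Mat3 := Fin 3 → Fin 3 → ℝ

/-- Euclidean dot product on `ℝ³`. -/
def dot3 (u w : V3) : ℝ := ∑ i, u i * w i

/-- A rational unit vector, i.e. an element of `𝕊² ∩ ℚ³`. -/
def IsRatUnit (k : V3) : Prop := dot3 k k = 1 ∧ ∀ i, ∃ q : ℚ, k i = (q : ℝ)

/-- Skew-symmetric `3 × 3` matrices. -/
def IsSkew (M : Mat3) : Prop := ∀ i j, M i j = - M j i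

def E1 : V3 := ![1,0,0]
def E2 : V3 := ![0,1,0]
def E3 : V3 := ![0,0,1]
def F1 : V3 := ![-1,0,0]
def F2 : V3 := ![0,-1,0]
def F3 : V3 := ![0,0,-1]

def myKb (k : V3) : V3 :=
  if k = E1 then E2 else if k = F1 then E3 else if k = E2 then E3
  else if k = F2 then E1 else if k = E3 then E1 else E2

def myKbb (k : V3) : V3 :=
  if k = E1 then E3 else if k = F1 then E2 else if k = E2 then E1
  else if k = F2 then E3 else if k = E3 then E2 else E1

def myA (k : V3) (M : Mat3) : ℝ :=
  1 + (1/2) * ∑ i, ∑ j, myKb k i * M i j * myKbb k j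

lemma ratE1 : ∀ i, ∃ q : ℚ, E1 i = (q : ℝ) := by
  intro i; fin_cases i
  · exact ⟨1, by norm_num [E1]⟩
  · exact ⟨0, by norm_num [E1]⟩
  · exact ⟨0, by norm_num [E1]⟩

lemma ratE2 : ∀ i, ∃ q : ℚ, E2 i = (q : ℝ) := by
  intro i; fin_cases i
  · exact ⟨0, by norm_num [E2]⟩
  · exact ⟨1, by norm_num [E2]⟩
  · exact ⟨0, by norm_num [E2]⟩

lemma ratE3 : ∀ i, ∃ q : ℚ, E3 i = (q : ℝ) := by
  intro i; fin_cases i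
  · exact ⟨0, by norm_num [E3]⟩
  · exact ⟨0, by norm_num [E3]⟩
  · exact ⟨1, by norm_num [E3]⟩

lemma ratF1 : ∀ i, ∃ q : ℚ, F1 i = (q : ℝ) := by
  intro i; fin_cases i
  · exact ⟨-1, by norm_num [F1]⟩
  · exact ⟨0, by norm_num [F1]⟩
  · exact ⟨0, by norm_num [F1]⟩

lemma ratF2 : ∀ i, ∃ q : ℚ, F2 i = (q : ℝ) := by
  intro i; fin_cases i
  · exact ⟨0, by norm_num [F2]⟩
  · exact ⟨-1, by norm_num [F2]⟩
  · exact ⟨0, by norm_num [F2]⟩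

lemma ratF3 : ∀ i, ∃ q : ℚ, F3 i = (q : ℝ) := by
  intro i; fin_cases i
  · exact ⟨0, by norm_num [F3]⟩
  · exact ⟨0, by norm_num [F3]⟩
  · exact ⟨-1, by norm_num [F3]⟩

lemma ne_lemmas : F1 ≠ E1 ∧ E2 ≠ E1 ∧ E2 ≠ F1 ∧ F2 ≠ E1 ∧ F2 ≠ F1 ∧ F2 ≠ E2 ∧
    E3 ≠ E1 ∧ E3 ≠ F1 ∧ E3 ≠ E2 ∧ E3 ≠ F2 ∧ F3 ≠ E1 ∧ F3 ≠ F1 ∧ F3 ≠ E2 ∧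
    F3 ≠ F2 ∧ F3 ≠ E3 := by
  refine ⟨?_,?_,?_,?_,?_,?_,?_,?_,?_,?_,?_,?_,?_,?_,?_⟩ <;>
    norm_num [E1,E2,E3,F1,F2,F3, funext_iff, Fin.forall_fin_succ]

lemma kb_vals : myKb E1 = E2 ∧ myKb F1 = E3 ∧ myKb E2 = E3 ∧ myKb F2 = E1 ∧
    myKb E3 = E1 ∧ myKb F3 = E2 := by
  obtain ⟨h1,h2,h3,h4,h5,h6,h7,h8,h9,h10,h11,h12,h13,h14,h15⟩ := ne_lemmas
  refine ⟨?_,?_,?_,?_,?_,?_⟩ <;> simp [myKb, h1,h2,h3,h4,h5,h6,h7,h8,h9,h10,h11,h12,h13,h14,h15]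

lemma kbb_vals : myKbb E1 = E3 ∧ myKbb F1 = E2 ∧ myKbb E2 = E1 ∧ myKbb F2 = E3 ∧
    myKbb E3 = E2 ∧ myKbb F3 = E1 := by
  obtain ⟨h1,h2,h3,h4,h5,h6,h7,h8,h9,h10,h11,h12,h13,h14,h15⟩ := ne_lemmas
  refine ⟨?_,?_,?_,?_,?_,?_⟩ <;> simp [myKbb, h1,h2,h3,h4,h5,h6,h7,h8,h9,h10,h11,h12,h13,h14,h15]

lemma a_vals (M : Mat3) : myA E1 M = 1 + M 1 2 / 2 ∧ myA F1 M = 1 + M 2 1 / 2 ∧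
    myA E2 M = 1 + M 2 0 / 2 ∧ myA F2 M = 1 + M 0 2 / 2 ∧
    myA E3 M = 1 + M 0 1 / 2 ∧ myA F3 M = 1 + M 1 0 / 2 := by
  obtain ⟨k1,k2,k3,k4,k5,k6⟩ := kb_vals
  obtain ⟨l1,l2,l3,l4,l5,l6⟩ := kbb_vals
  refine ⟨?_,?_,?_,?_,?_,?_⟩ <;>
    · simp only [myA, k1,k2,k3,k4,k5,k6, l1,l2,l3,l4,l5,l6]
      simp [E1,E2,E3, Fin.sum_univ_three]
      ring

lemma entry_bound (M : Mat3) (i j : Fin 3) : |M i j| ≤ ‖M‖ :=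
  le_trans (by simpa using norm_le_pi_norm (M i) j) (norm_le_pi_norm M i)

/-- **First Geometric Lemma.** There are finitely many rational unit
directions `k` with associated orthonormal bases `(k, k̄, k̄̄)` and smooth positive
amplitudes `a_{b,k}` on a ball `B_{ε_b}(0)` of skew-symmetric matrices such that every
skew-symmetric `M_b` in the ball decomposes as
`M_b = Σ_k a_{b,k}(M_b) (k̄⊗k̄̄ − k̄̄⊗k̄)`. -/
theorem first_geometric_lemma :
    ∃ (Λb : Finset V3) (kb kbb : V3 → V3) (εb : ℝ) (a : V3 → Mat3 → ℝ),
      0 < εb ∧ Λb.Nonempty ∧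
      (∀ k ∈ Λb, IsRatUnit k ∧
        dot3 (kb k) (kb k) = 1 ∧ dot3 (kbb k) (kbb k) = 1 ∧
        dot3 k (kb k) = 0 ∧ dot3 k (kbb k) = 0 ∧ dot3 (kb k) (kbb k) = 0) ∧
      (∀ k ∈ Λb,
        ContDiffOn ℝ (⊤ : ℕ∞) (a k) {M : Mat3 | IsSkew M ∧ ‖M‖ < εb} ∧
        ∀ M : Mat3, IsSkew M → ‖M‖ < εb → 0 < a k M) ∧
      (∀ M : Mat3, IsSkew M → ‖M‖ < εb →
        ∀ i j, M i j = ∑ k ∈ Λb, a k M * (kb k i * kbb k j - kbb k i * kb k j)) := by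
  obtain ⟨h1,h2,h3,h4,h5,h6,h7,h8,h9,h10,h11,h12,h13,h14,h15⟩ := ne_lemmas
  obtain ⟨k1,k2,k3,k4,k5,k6⟩ := kb_vals
  obtain ⟨l1,l2,l3,l4,l5,l6⟩ := kbb_vals
  refine ⟨{E1,F1,E2,F2,E3,F3}, myKb, myKbb, 1, myA, one_pos, ⟨E1, by simp⟩, ?_, ?_, ?_⟩
  · intro k hk
    simp only [Finset.mem_insert, Finset.mem_singleton] at hk
    rcases hk with rfl|rfl|rfl|rfl|rfl|rfl <;>
      · simp only [k1,k2,k3,k4,k5,k6,l1,l2,l3,l4,l5,l6]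
        refine ⟨⟨?_, ?_⟩, ?_, ?_, ?_, ?_, ?_⟩ <;>
        first
        | exact ratE1 | exact ratE2 | exact ratE3
        | exact ratF1 | exact ratF2 | exact ratF3
        | norm_num [dot3, E1,E2,E3,F1,F2,F3, Fin.sum_univ_three, Matrix.cons_val_two, Matrix.cons_val_one, Matrix.cons_val_zero, Matrix.head_cons, Matrix.tail_cons]
  · intro k hk
    constructor
    · apply ContDiff.contDiffOn
      unfold myA
      exact contDiff_const.add (contDiff_const.mul
        (ContDiff.sum fun i _ => ContDiff.sum fun j _ => by fun_prop))
    · intro M _ hM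
      simp only [Finset.mem_insert, Finset.mem_singleton] at hk
      obtain ⟨a1,a2,a3,a4,a5,a6⟩ := a_vals M
      have b1 := abs_lt.mp (lt_of_le_of_lt (entry_bound M 1 2) hM)
      have b2 := abs_lt.mp (lt_of_le_of_lt (entry_bound M 2 1) hM)
      have b3 := abs_lt.mp (lt_of_le_of_lt (entry_bound M 2 0) hM)
      have b4 := abs_lt.mp (lt_of_le_of_lt (entry_bound M 0 2) hM)
      have b5 := abs_lt.mp (lt_of_le_of_lt (entry_bound M 0 1) hM)
      have b6 := abs_lt.mp (lt_of_le_of_lt (entry_bound M 1 0) hM)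
      rcases hk with rfl|rfl|rfl|rfl|rfl|rfl <;>
        [rw [a1]; rw [a2]; rw [a3]; rw [a4]; rw [a5]; rw [a6]] <;> linarith [b1.1,b2.1,b3.1,b4.1,b5.1,b6.1]
  · intro M hM _ i j
    obtain ⟨a1,a2,a3,a4,a5,a6⟩ := a_vals M
    have hsum : ∑ k ∈ ({E1,F1,E2,F2,E3,F3} : Finset V3),
        myA k M * (myKb k i * myKbb k j - myKbb k i * myKb k j)
        = myA E1 M * (E2 i * E3 j - E3 i * E2 j)
        + myA F1 M * (E3 i * E2 j - E2 i * E3 j)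
        + myA E2 M * (E3 i * E1 j - E1 i * E3 j)
        + myA F2 M * (E1 i * E3 j - E3 i * E1 j)
        + myA E3 M * (E1 i * E2 j - E2 i * E1 j)
        + myA F3 M * (E2 i * E1 j - E1 i * E2 j) := by
      rw [Finset.sum_insert (by simp [h1,h2,h3,h4,h5,h6,h7,h8,h9,h10,h11,h12,h13,h14,h15, Ne.symm]),
          Finset.sum_insert (by simp [h1,h2,h3,h4,h5,h6,h7,h8,h9,h10,h11,h12,h13,h14,h15, Ne.symm]),
          Finset.sum_insert (by simp [h1,h2,h3,h4,h5,h6,h7,h8,h9,h10,h11,h12,h13,h14,h15, Ne.symm]),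
          Finset.sum_insert (by simp [h1,h2,h3,h4,h5,h6,h7,h8,h9,h10,h11,h12,h13,h14,h15, Ne.symm]),
          Finset.sum_insert (by simp [h1,h2,h3,h4,h5,h6,h7,h8,h9,h10,h11,h12,h13,h14,h15, Ne.symm]),
          Finset.sum_singleton, k1,k2,k3,k4,k5,k6,l1,l2,l3,l4,l5,l6]
      ring
    rw [hsum, a1,a2,a3,a4,a5,a6]
    have s01 := hM 0 1
    have s02 := hM 0 2
    have s12 := hM 1 2
    have s00 := hM 0 0
    have s11 := hM 1 1
    have s22 := hM 2 2
    fin_cases i <;> fin_cases j <;> simp [E1,E2,E3] <;> linarith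


end
end

section
/- There exist a finite set Λ_u ⊂ 𝕊² ∩ ℚ³, for each k ∈ Λ_u an orthonormal basis (k, k̄, k̄̄) of ℝ³, a constant ε_u > 0, and smooth positive functions a_{u,k} : B_{ε_u}(Id) → ℝ defined on the ball of radius ε_u centered at the identity matrix in the space of real 3×3 symmetric matrices, such that for every symmetric matrix R_u ∈ B_{ε_u}(Id): R_u = Σ_{k∈Λ_u} a_{u,k}(R_u) k̄⊗k̄. -/
open MeasureTheory Real Set ENNReal

noncomputable section

/-- Symmetric `3 × 3` matrices. -/
def IsSym (M : Mat3) : Prop := ∀ i j, M i j = M j i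

/-- The `3 × 3` identity matrix. -/
def idMat3 : Mat3 := fun i j => if i = j then 1 else 0

/-! ### Auxiliary explicit data -/

def K1 : V3 := ![0, 0, 1]
def K2 : V3 := ![2/3, 2/3, 1/3]
def K3 : V3 := ![0, 1, 0]
def K4 : V3 := ![2/3, 1/3, 2/3]
def K5 : V3 := ![1, 0, 0]
def K6 : V3 := ![1/3, 2/3, 2/3]

def sq2i : ℝ := (Real.sqrt 2)⁻¹

lemma sq2i_sq : sq2i * sq2i = 1/2 := by
  rw [sq2i, ← mul_inv, Real.mul_self_sqrt (by norm_num)]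
  norm_num

def W1 : V3 := ![sq2i, sq2i, 0]
def W2 : V3 := ![sq2i, -sq2i, 0]
def W3 : V3 := ![sq2i, 0, sq2i]
def W4 : V3 := ![sq2i, 0, -sq2i]
def W5 : V3 := ![0, sq2i, sq2i]
def W6 : V3 := ![0, sq2i, -sq2i]

def Wb1 : V3 := ![-sq2i, sq2i, 0]
def Wb2 : V3 := ![sq2i/3, sq2i/3, -4*sq2i/3]
def Wb3 : V3 := ![sq2i, 0, -sq2i]
def Wb4 : V3 := ![-sq2i/3, 4*sq2i/3, -sq2i/3]
def Wb5 : V3 := ![0, -sq2i, sq2i]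
def Wb6 : V3 := ![-4*sq2i/3, sq2i/3, sq2i/3]

open Classical in
def kbF : V3 → V3 := fun k =>
  if k = K1 then W1 else if k = K2 then W2 else if k = K3 then W3
  else if k = K4 then W4 else if k = K5 then W5 else W6

open Classical in
def kbbF : V3 → V3 := fun k =>
  if k = K1 then Wb1 else if k = K2 then Wb2 else if k = K3 then Wb3
  else if k = K4 then Wb4 else if k = K5 then Wb5 else Wb6

open Classical in
def aF : V3 → Mat3 → ℝ := fun k M =>
  if k = K1 then (M 0 0 + M 1 1 - M 2 2)/2 + M 0 1
  else if k = K2 then (M 0 0 + M 1 1 - M 2 2)/2 - M 0 1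
  else if k = K3 then (M 0 0 - M 1 1 + M 2 2)/2 + M 0 2
  else if k = K4 then (M 0 0 - M 1 1 + M 2 2)/2 - M 0 2
  else if k = K5 then (-M 0 0 + M 1 1 + M 2 2)/2 + M 1 2
  else (-M 0 0 + M 1 1 + M 2 2)/2 - M 1 2

-- pairwise distinctness
lemma ne12 : K1 ≠ K2 := fun h => by have := congrFun h 0; norm_num [K1, K2] at this
lemma ne13 : K1 ≠ K3 := fun h => by have := congrFun h 1; norm_num [K1, K3] at this
lemma ne14 : K1 ≠ K4 := fun h => by have := congrFun h 0; norm_num [K1, K4] at this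
lemma ne15 : K1 ≠ K5 := fun h => by have := congrFun h 0; norm_num [K1, K5] at this
lemma ne16 : K1 ≠ K6 := fun h => by have := congrFun h 0; norm_num [K1, K6] at this
lemma ne23 : K2 ≠ K3 := fun h => by have := congrFun h 0; norm_num [K2, K3] at this
lemma ne24 : K2 ≠ K4 := fun h => by have := congrFun h 1; norm_num [K2, K4] at this
lemma ne25 : K2 ≠ K5 := fun h => by have := congrFun h 0; norm_num [K2, K5] at this
lemma ne26 : K2 ≠ K6 := fun h => by have := congrFun h 0; norm_num [K2, K6] at this
lemma ne34 : K3 ≠ K4 := fun h => by have := congrFun h 0; norm_num [K3, K4] at this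
lemma ne35 : K3 ≠ K5 := fun h => by have := congrFun h 0; norm_num [K3, K5] at this
lemma ne36 : K3 ≠ K6 := fun h => by have := congrFun h 0; norm_num [K3, K6] at this
lemma ne45 : K4 ≠ K5 := fun h => by have := congrFun h 0; norm_num [K4, K5] at this
lemma ne46 : K4 ≠ K6 := fun h => by have := congrFun h 0; norm_num [K4, K6] at this
lemma ne56 : K5 ≠ K6 := fun h => by have := congrFun h 0; norm_num [K5, K6] at this

open Classical in
lemma kbF_eval : kbF K1 = W1 ∧ kbF K2 = W2 ∧ kbF K3 = W3 ∧ kbF K4 = W4 ∧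
    kbF K5 = W5 ∧ kbF K6 = W6 := by
  refine ⟨?_, ?_, ?_, ?_, ?_, ?_⟩ <;>
  simp [kbF, ne12, ne13, ne14, ne15, ne16, ne23, ne24, ne25, ne26,
    ne34, ne35, ne36, ne45, ne46, ne56,
    ne12.symm, ne13.symm, ne14.symm, ne15.symm, ne16.symm, ne23.symm, ne24.symm,
    ne25.symm, ne26.symm, ne34.symm, ne35.symm, ne36.symm, ne45.symm, ne46.symm, ne56.symm]

open Classical in
lemma kbbF_eval : kbbF K1 = Wb1 ∧ kbbF K2 = Wb2 ∧ kbbF K3 = Wb3 ∧ kbbF K4 = Wb4 ∧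
    kbbF K5 = Wb5 ∧ kbbF K6 = Wb6 := by
  refine ⟨?_, ?_, ?_, ?_, ?_, ?_⟩ <;>
  simp [kbbF, ne12.symm, ne13.symm, ne14.symm, ne15.symm, ne16.symm, ne23.symm, ne24.symm,
    ne25.symm, ne26.symm, ne34.symm, ne35.symm, ne36.symm, ne45.symm, ne46.symm, ne56.symm]

open Classical in
lemma aF_eval (M : Mat3) :
    aF K1 M = (M 0 0 + M 1 1 - M 2 2)/2 + M 0 1 ∧
    aF K2 M = (M 0 0 + M 1 1 - M 2 2)/2 - M 0 1 ∧
    aF K3 M = (M 0 0 - M 1 1 + M 2 2)/2 + M 0 2 ∧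
    aF K4 M = (M 0 0 - M 1 1 + M 2 2)/2 - M 0 2 ∧
    aF K5 M = (-M 0 0 + M 1 1 + M 2 2)/2 + M 1 2 ∧
    aF K6 M = (-M 0 0 + M 1 1 + M 2 2)/2 - M 1 2 := by
  refine ⟨?_, ?_, ?_, ?_, ?_, ?_⟩ <;>
  simp [aF, ne12.symm, ne13.symm, ne14.symm, ne15.symm, ne16.symm, ne23.symm, ne24.symm,
    ne25.symm, ne26.symm, ne34.symm, ne35.symm, ne36.symm, ne45.symm, ne46.symm, ne56.symm]

lemma entry_bound_s9 {M : Mat3} {ε : ℝ} (h : ‖M - idMat3‖ < ε) (i j : Fin 3) :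
    |M i j - idMat3 i j| < ε := by
  have h1 : |(M - idMat3) i j| ≤ ‖M - idMat3‖ :=
    le_trans (norm_le_pi_norm ((M - idMat3) i) j) (norm_le_pi_norm (M - idMat3) i)
  simpa using lt_of_le_of_lt h1 h

set_option maxHeartbeats 1000000 in
/-- **Second Geometric Lemma.** There are finitely many rational unit
directions `k` with associated orthonormal bases `(k, k̄, k̄̄)` and smooth positive
amplitudes `a_{u,k}` on a ball `B_{ε_u}(Id)` of symmetric matrices such that every
symmetric `R_u` in the ball decomposes as `R_u = Σ_k a_{u,k}(R_u) k̄⊗k̄`. -/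
theorem second_geometric_lemma :
    ∃ (Λu : Finset V3) (kb kbb : V3 → V3) (εu : ℝ) (a : V3 → Mat3 → ℝ),
      0 < εu ∧ Λu.Nonempty ∧
      (∀ k ∈ Λu, IsRatUnit k ∧
        dot3 (kb k) (kb k) = 1 ∧ dot3 (kbb k) (kbb k) = 1 ∧
        dot3 k (kb k) = 0 ∧ dot3 k (kbb k) = 0 ∧ dot3 (kb k) (kbb k) = 0) ∧
      (∀ k ∈ Λu,
        ContDiffOn ℝ (⊤ : ℕ∞) (a k) {M : Mat3 | IsSym M ∧ ‖M - idMat3‖ < εu} ∧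
        ∀ M : Mat3, IsSym M → ‖M - idMat3‖ < εu → 0 < a k M) ∧
      (∀ R : Mat3, IsSym R → ‖R - idMat3‖ < εu →
        ∀ i j, R i j = ∑ k ∈ Λu, a k R * (kb k i * kb k j)) := by
  classical
  obtain ⟨hb1, hb2, hb3, hb4, hb5, hb6⟩ := kbF_eval
  obtain ⟨hc1, hc2, hc3, hc4, hc5, hc6⟩ := kbbF_eval
  have hs := sq2i_sq
  refine ⟨{K1, K2, K3, K4, K5, K6}, kbF, kbbF, 1/8, aF, by norm_num,
    ⟨K1, by simp⟩, ?_, ?_, ?_⟩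
  · -- orthonormality and rationality
    intro k hk
    simp only [Finset.mem_insert, Finset.mem_singleton] at hk
    rcases hk with rfl | rfl | rfl | rfl | rfl | rfl
    · refine ⟨⟨by norm_num [dot3, Fin.sum_univ_three, K1, Matrix.cons_val_two, Matrix.tail_cons, Matrix.head_cons], ?_⟩, ?_, ?_, ?_, ?_, ?_⟩
      · intro i; fin_cases i
        exacts [⟨0, by norm_num [K1]⟩, ⟨0, by norm_num [K1]⟩, ⟨1, by norm_num [K1]⟩]
      all_goals
        simp only [hb1, hc1]
        simp only [dot3, Fin.sum_univ_three, K1, W1, Wb1,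
          Matrix.cons_val_zero, Matrix.cons_val_one, Matrix.head_cons,
          Matrix.cons_val_two, Matrix.tail_cons]
        first
          | linear_combination 2 * hs
          | linear_combination (-2) * hs
          | ring
    · refine ⟨⟨by norm_num [dot3, Fin.sum_univ_three, K2, Matrix.cons_val_two, Matrix.tail_cons, Matrix.head_cons], ?_⟩, ?_, ?_, ?_, ?_, ?_⟩
      · intro i; fin_cases i
        exacts [⟨2/3, by norm_num [K2]⟩, ⟨2/3, by norm_num [K2]⟩, ⟨1/3, by norm_num [K2]⟩]
      all_goals
        simp only [hb2, hc2]
        simp only [dot3, Fin.sum_univ_three, K2, W2, Wb2,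
          Matrix.cons_val_zero, Matrix.cons_val_one, Matrix.head_cons,
          Matrix.cons_val_two, Matrix.tail_cons]
        first
          | linear_combination 2 * hs
          | linear_combination (-2) * hs
          | ring
    · refine ⟨⟨by norm_num [dot3, Fin.sum_univ_three, K3, Matrix.cons_val_two, Matrix.tail_cons, Matrix.head_cons], ?_⟩, ?_, ?_, ?_, ?_, ?_⟩
      · intro i; fin_cases i
        exacts [⟨0, by norm_num [K3]⟩, ⟨1, by norm_num [K3]⟩, ⟨0, by norm_num [K3]⟩]
      all_goals
        simp only [hb3, hc3]
        simp only [dot3, Fin.sum_univ_three, K3, W3, Wb3,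
          Matrix.cons_val_zero, Matrix.cons_val_one, Matrix.head_cons,
          Matrix.cons_val_two, Matrix.tail_cons]
        first
          | linear_combination 2 * hs
          | linear_combination (-2) * hs
          | ring
    · refine ⟨⟨by norm_num [dot3, Fin.sum_univ_three, K4, Matrix.cons_val_two, Matrix.tail_cons, Matrix.head_cons], ?_⟩, ?_, ?_, ?_, ?_, ?_⟩
      · intro i; fin_cases i
        exacts [⟨2/3, by norm_num [K4]⟩, ⟨1/3, by norm_num [K4]⟩, ⟨2/3, by norm_num [K4]⟩]
      all_goals
        simp only [hb4, hc4]
        simp only [dot3, Fin.sum_univ_three, K4, W4, Wb4,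
          Matrix.cons_val_zero, Matrix.cons_val_one, Matrix.head_cons,
          Matrix.cons_val_two, Matrix.tail_cons]
        first
          | linear_combination 2 * hs
          | linear_combination (-2) * hs
          | ring
    · refine ⟨⟨by norm_num [dot3, Fin.sum_univ_three, K5, Matrix.cons_val_two, Matrix.tail_cons, Matrix.head_cons], ?_⟩, ?_, ?_, ?_, ?_, ?_⟩
      · intro i; fin_cases i
        exacts [⟨1, by norm_num [K5]⟩, ⟨0, by norm_num [K5]⟩, ⟨0, by norm_num [K5]⟩]
      all_goals
        simp only [hb5, hc5]
        simp only [dot3, Fin.sum_univ_three, K5, W5, Wb5,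
          Matrix.cons_val_zero, Matrix.cons_val_one, Matrix.head_cons,
          Matrix.cons_val_two, Matrix.tail_cons]
        first
          | linear_combination 2 * hs
          | linear_combination (-2) * hs
          | ring
    · refine ⟨⟨by norm_num [dot3, Fin.sum_univ_three, K6, Matrix.cons_val_two, Matrix.tail_cons, Matrix.head_cons], ?_⟩, ?_, ?_, ?_, ?_, ?_⟩
      · intro i; fin_cases i
        exacts [⟨1/3, by norm_num [K6]⟩, ⟨2/3, by norm_num [K6]⟩, ⟨2/3, by norm_num [K6]⟩]
      all_goals
        simp only [hb6, hc6]
        simp only [dot3, Fin.sum_univ_three, K6, W6, Wb6,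
          Matrix.cons_val_zero, Matrix.cons_val_one, Matrix.head_cons,
          Matrix.cons_val_two, Matrix.tail_cons]
        first
          | linear_combination 2 * hs
          | linear_combination (-2) * hs
          | ring
  · -- smoothness and positivity
    intro k hk
    simp only [Finset.mem_insert, Finset.mem_singleton] at hk
    have hsmooth : ∀ k', ContDiffOn ℝ (⊤ : ℕ∞) (aF k')
        {M : Mat3 | IsSym M ∧ ‖M - idMat3‖ < 1/8} := by
      intro k'
      apply ContDiff.contDiffOn
      unfold aF
      split_ifs <;> · simp only [div_eq_mul_inv]; fun_prop
    have hid : ∀ i : Fin 3, idMat3 i i = 1 := by intro i; simp [idMat3]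
    have hid' : ∀ i j : Fin 3, i ≠ j → idMat3 i j = 0 := by
      intro i j h; simp [idMat3, h]
    refine ⟨hsmooth k, ?_⟩
    intro M _ hM
    have e00 := entry_bound_s9 hM 0 0
    have e11 := entry_bound_s9 hM 1 1
    have e22 := entry_bound_s9 hM 2 2
    have e01 := entry_bound_s9 hM 0 1
    have e02 := entry_bound_s9 hM 0 2
    have e12 := entry_bound_s9 hM 1 2
    rw [hid 0] at e00; rw [hid 1] at e11; rw [hid 2] at e22
    rw [hid' 0 1 (by decide)] at e01
    rw [hid' 0 2 (by decide)] at e02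
    rw [hid' 1 2 (by decide)] at e12
    rw [abs_lt] at e00 e11 e22 e01 e02 e12
    simp only [sub_zero] at e01 e02 e12
    obtain ⟨ha1, ha2, ha3, ha4, ha5, ha6⟩ := aF_eval M
    rcases hk with rfl | rfl | rfl | rfl | rfl | rfl
    · rw [ha1]; rcases e00 with ⟨l0,r0⟩; rcases e11 with ⟨l1,r1⟩
      rcases e22 with ⟨l2,r2⟩; rcases e01 with ⟨l3,r3⟩; linarith
    · rw [ha2]; rcases e00 with ⟨l0,r0⟩; rcases e11 with ⟨l1,r1⟩
      rcases e22 with ⟨l2,r2⟩; rcases e01 with ⟨l3,r3⟩; linarith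
    · rw [ha3]; rcases e00 with ⟨l0,r0⟩; rcases e11 with ⟨l1,r1⟩
      rcases e22 with ⟨l2,r2⟩; rcases e02 with ⟨l3,r3⟩; linarith
    · rw [ha4]; rcases e00 with ⟨l0,r0⟩; rcases e11 with ⟨l1,r1⟩
      rcases e22 with ⟨l2,r2⟩; rcases e02 with ⟨l3,r3⟩; linarith
    · rw [ha5]; rcases e00 with ⟨l0,r0⟩; rcases e11 with ⟨l1,r1⟩
      rcases e22 with ⟨l2,r2⟩; rcases e12 with ⟨l3,r3⟩; linarith
    · rw [ha6]; rcases e00 with ⟨l0,r0⟩; rcases e11 with ⟨l1,r1⟩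
      rcases e22 with ⟨l2,r2⟩; rcases e12 with ⟨l3,r3⟩; linarith
  · -- the decomposition
    intro R hR _ i j
    have hsum : ∀ f : V3 → ℝ,
        ∑ k ∈ ({K1, K2, K3, K4, K5, K6} : Finset V3), f k
          = f K1 + f K2 + f K3 + f K4 + f K5 + f K6 := by
      intro f
      have m1 : K1 ∉ ({K2, K3, K4, K5, K6} : Finset V3) := by
        simp only [Finset.mem_insert, Finset.mem_singleton]
        push_neg
        exact ⟨ne12, ne13, ne14, ne15, ne16⟩
      have m2 : K2 ∉ ({K3, K4, K5, K6} : Finset V3) := by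
        simp only [Finset.mem_insert, Finset.mem_singleton]
        push_neg
        exact ⟨ne23, ne24, ne25, ne26⟩
      have m3 : K3 ∉ ({K4, K5, K6} : Finset V3) := by
        simp only [Finset.mem_insert, Finset.mem_singleton]
        push_neg
        exact ⟨ne34, ne35, ne36⟩
      have m4 : K4 ∉ ({K5, K6} : Finset V3) := by
        simp only [Finset.mem_insert, Finset.mem_singleton]
        push_neg
        exact ⟨ne45, ne46⟩
      have m5 : K5 ∉ ({K6} : Finset V3) := by
        simp only [Finset.mem_singleton]
        exact ne56
      rw [Finset.sum_insert m1, Finset.sum_insert m2, Finset.sum_insert m3,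
        Finset.sum_insert m4, Finset.sum_insert m5, Finset.sum_singleton]
      ring
    rw [hsum]
    obtain ⟨ha1, ha2, ha3, ha4, ha5, ha6⟩ := aF_eval R
    rw [ha1, ha2, ha3, ha4, ha5, ha6, hb1, hb2, hb3, hb4, hb5, hb6]
    have h10 := hR 1 0
    have h20 := hR 2 0
    have h21 := hR 2 1
    have f0 : ∀ (h : (0:ℕ) < 3), (⟨0, h⟩ : Fin 3) = 0 := fun _ => rfl
    have f1 : ∀ (h : (1:ℕ) < 3), (⟨1, h⟩ : Fin 3) = 1 := fun _ => rfl
    have f2 : ∀ (h : (2:ℕ) < 3), (⟨2, h⟩ : Fin 3) = 2 := fun _ => rfl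
    fin_cases i <;> fin_cases j <;>
      norm_num [W1, W2, W3, W4, W5, W6, f0, f1, f2, Matrix.cons_val_two, Matrix.tail_cons, Matrix.head_cons] <;>
      first
        | linear_combination (-2 : ℝ) * R 0 0 * hs
        | linear_combination (-2 : ℝ) * R 1 1 * hs
        | linear_combination (-2 : ℝ) * R 2 2 * hs
        | linear_combination (-2 : ℝ) * R 0 1 * hs
        | linear_combination (-2 : ℝ) * R 0 2 * hs
        | linear_combination (-2 : ℝ) * R 1 2 * hs
        | linear_combination h10 + (-2 : ℝ) * R 0 1 * hs
        | linear_combination h20 + (-2 : ℝ) * R 0 2 * hs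
        | linear_combination h21 + (-2 : ℝ) * R 1 2 * hs
        | linear_combination (2 : ℝ) * R 0 0 * hs
        | linear_combination (2 : ℝ) * R 1 1 * hs
        | linear_combination (2 : ℝ) * R 2 2 * hs
        | linear_combination (2 : ℝ) * R 0 1 * hs
        | linear_combination (2 : ℝ) * R 0 2 * hs
        | linear_combination (2 : ℝ) * R 1 2 * hs
        | linear_combination h10 + (2 : ℝ) * R 0 1 * hs
        | linear_combination h20 + (2 : ℝ) * R 0 2 * hs
        | linear_combination h21 + (2 : ℝ) * R 1 2 * hs
end
end

section
/- For every smooth vector field v : 𝕋³ → ℝ³ with zero spatial mean, there exists a smooth matrix field R : 𝕋³ → ℝ^{3×3} such that R(x) is symmetric and trace-free for every x, and div R = v pointwise (i.e., ∂_j R_{ji} = v_i for i = 1,2,3). -/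
open MeasureTheory Real Set ENNReal intervalIntegral

noncomputable section

/-- A fundamental domain for the torus. -/
def cube : Set V3 := Set.Icc 0 1

/-- `ℤ³`-periodicity: a function on `ℝ³` descends to the torus. -/
def SpacePeriodic {E : Type*} (f : V3 → E) : Prop :=
  ∀ (x : V3) (n : Fin 3 → ℤ), f (x + fun i => (n i : ℝ)) = f x

/-- Partial derivative `∂ᵢ f`. -/
def pd (i : Fin 3) (f : V3 → ℝ) (x : V3) : ℝ := fderiv ℝ f x (Pi.single i 1)

/-- Divergence of a matrix field: `(div M)_i = ∂_j M_{ji}`. -/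
def divM (M : V3 → Mat3) (x : V3) (i : Fin 3) : ℝ := ∑ j, pd j (fun y => M y j i) x

variable {E : Type*} [NormedAddCommGroup E] [NormedSpace ℝ E]

def ek (k : Fin 3) : V3 := Pi.single k 1

variable {E : Type*} [NormedAddCommGroup E] [NormedSpace ℝ E]

def Tw (w : ℝ → ℝ) (k : Fin 3) (f : V3 → E) (x : V3) : E :=
  ∫ t in (0:ℝ)..1, w t • f (x + t • ek k)

lemma uIoc01 : Set.uIoc (0:ℝ) 1 = Set.Ioc 0 1 := Set.uIoc_of_le one_pos.le

set_option synthInstance.maxHeartbeats 1000000 in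
theorem Tw_hasFDerivAt [CompleteSpace E] {w : ℝ → ℝ} (hw : Continuous w) {k : Fin 3}
    {f : V3 → E} (hf : ContDiff ℝ (⊤ : ℕ∞) f) (x₀ : V3) :
    HasFDerivAt (Tw w k f) (∫ t in (0:ℝ)..1, w t • fderiv ℝ f (x₀ + t • ek k)) x₀ := by
  have hfd : Differentiable ℝ f := hf.differentiable (by simp)
  have hdf : Continuous (fderiv ℝ f) := hf.continuous_fderiv (by simp)
  have hK : IsCompact ((fun p : V3 × ℝ => p.1 + p.2 • ek k) ''
      (Metric.closedBall x₀ 1 ×ˢ Icc (-2:ℝ) 2)) :=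
    ((isCompact_closedBall x₀ 1).prod isCompact_Icc).image (by fun_prop)
  obtain ⟨C, hC⟩ := hK.exists_bound_of_continuousOn
    hdf.continuousOn
  obtain ⟨Cw, hCw⟩ := (isCompact_Icc (a := (-2:ℝ)) (b := 2)).exists_bound_of_continuousOn
    hw.continuousOn
  have hmem : ∀ t ∈ Set.uIoc (0:ℝ) 1, t ∈ Icc (-2:ℝ) 2 := by
    intro t ht; rw [uIoc01] at ht; exact ⟨by linarith [ht.1], by linarith [ht.2]⟩
  -- derivative of integrand
  have hFD : ∀ (x : V3) (t : ℝ),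
      HasFDerivAt (fun y : V3 => w t • f (y + t • ek k))
        (w t • fderiv ℝ f (x + t • ek k)) x := by
    intro x t
    have h1 : HasFDerivAt (fun y : V3 => y + t • ek k)
        (ContinuousLinearMap.id ℝ V3) x := (hasFDerivAt_id x).add_const _
    have h2 := ((hfd (x + t • ek k)).hasFDerivAt.comp x h1)
    exact (by simpa using h2.const_smul (w t) : HasFDerivAt (w t • f ∘ fun y => y + t • ek k) (w t • fderiv ℝ f (x + t • ek k)) x)
  have key := intervalIntegral.hasFDerivAt_integral_of_dominated_of_fderiv_le
    (F := fun (x : V3) (t : ℝ) => w t • f (x + t • ek k))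
    (F' := fun (x : V3) (t : ℝ) => w t • fderiv ℝ f (x + t • ek k))
    (x₀ := x₀) (a := 0) (b := 1) (μ := volume)
    (bound := fun _ => ‖Cw‖ * ‖C‖ + 1) (Metric.ball_mem_nhds x₀ one_pos)
    ?_ ?_ ?_ ?_ ?_ ?_
  · exact key
  · filter_upwards with x
    exact ((hw.smul ((hf.continuous.comp (by fun_prop)))).aestronglyMeasurable).restrict
  · exact ((hw.smul ((hf.continuous.comp (by fun_prop)))).intervalIntegrable 0 1)
  · exact ((hw.smul (hdf.comp (by fun_prop))).aestronglyMeasurable).restrict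
  · filter_upwards with t
    intro ht x hx
    have hxmem : x + t • ek k ∈ (fun p : V3 × ℝ => p.1 + p.2 • ek k) ''
        (Metric.closedBall x₀ 1 ×ˢ Icc (-2:ℝ) 2) :=
      ⟨(x, t), ⟨Metric.ball_subset_closedBall hx, hmem t ht⟩, rfl⟩
    have h1 := hC _ hxmem
    have h2 := hCw t (hmem t ht)
    refine le_trans (norm_smul_le (w t) (fderiv ℝ f (x + t • ek k))) ?_
    have hn1 : ‖w t‖ ≤ ‖Cw‖ := le_trans h2 (le_abs_self _)
    have hn2 : ‖fderiv ℝ f (x + t • ek k)‖ ≤ ‖C‖ := le_trans h1 (le_abs_self _)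
    nlinarith [norm_nonneg (w t), norm_nonneg (fderiv ℝ f (x + t • ek k)), norm_nonneg (Cw), norm_nonneg C]
  · exact intervalIntegrable_const
  · filter_upwards with t
    intro ht x hx
    exact hFD x t

theorem fderiv_Tw [CompleteSpace E] {w : ℝ → ℝ} (hw : Continuous w) {k : Fin 3}
    {f : V3 → E} (hf : ContDiff ℝ (⊤ : ℕ∞) f) :
    fderiv ℝ (Tw w k f) = Tw w k (fderiv ℝ f) :=
  funext fun x => (Tw_hasFDerivAt hw hf x).fderiv

theorem Tw_contDiff {w : ℝ → ℝ} (hw : Continuous w) {k : Fin 3}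
    {E : Type} [NormedAddCommGroup E] [NormedSpace ℝ E] [CompleteSpace E]
    {f : V3 → E} (hf : ContDiff ℝ (⊤ : ℕ∞) f) :
    ContDiff ℝ (⊤ : ℕ∞) (Tw w k f) := by
  have key : ∀ (n : ℕ) (E : Type) (_ : NormedAddCommGroup E) (_ : @NormedSpace ℝ E _ _)
      (_ : @CompleteSpace E _)
      (f : V3 → E), ContDiff ℝ (⊤ : ℕ∞) f → ContDiff ℝ (n : ℕ) (Tw w k f) := by
    intro n
    induction n with
    | zero =>
      intro E nE sE cE f hf
      letI := nE; letI := sE; letI := cE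
      have hd : Differentiable ℝ (Tw w k f) := fun x => (Tw_hasFDerivAt hw hf x).differentiableAt
      exact contDiff_zero.2 hd.continuous
    | succ n ih =>
      intro E nE sE cE f hf
      letI := nE; letI := sE; letI := cE
      have hcast : ((n + 1 : ℕ) : WithTop ℕ∞) = (n : WithTop ℕ∞) + 1 := by push_cast; ring
      rw [hcast, contDiff_succ_iff_fderiv]
      have hd : Differentiable ℝ (Tw w k f) := fun x => (Tw_hasFDerivAt hw hf x).differentiableAt
      refine ⟨hd, by simp, ?_⟩
      rw [fderiv_Tw hw hf]
      exact ih _ inferInstance inferInstance inferInstance _ ((contDiff_infty_iff_fderiv.1 hf).2)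
  rw [contDiff_infty]
  exact fun n => key n E inferInstance inferInstance inferInstance f hf


lemma SpacePeriodic.ek_add {f : V3 → E} (hf : SpacePeriodic f) (k : Fin 3) (x : V3) :
    f (x + ek k) = f x := by
  have h := hf x (Pi.single k 1)
  have he : (fun i => ((Pi.single k (1:ℤ) : Fin 3 → ℤ) i : ℝ)) = ek k := by
    funext i
    by_cases hik : i = k
    · subst hik; simp [ek]
    · simp [ek, Pi.single_apply, hik]
  rwa [he] at h

theorem Tw_periodic {w : ℝ → ℝ} {k : Fin 3} {f : V3 → E} (hf : SpacePeriodic f) :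
    SpacePeriodic (Tw w k f) := by
  intro x n
  have he : (fun t : ℝ => w t • f ((x + fun i => ((n i : ℤ) : ℝ)) + t • ek k))
      = fun t : ℝ => w t • f (x + t • ek k) := by
    funext t
    rw [add_right_comm, hf (x + t • ek k) n]
  show (∫ t in (0:ℝ)..1, w t • f ((x + fun i => ((n i : ℤ) : ℝ)) + t • ek k)) = _
  rw [he]; rfl

theorem pd_periodic {f : V3 → ℝ} (hf : ContDiff ℝ (⊤ : ℕ∞) f) (hper : SpacePeriodic f)
    (j : Fin 3) : SpacePeriodic (pd j f) := by
  intro x n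
  have hfd : Differentiable ℝ f := hf.differentiable (by simp)
  have h1 : HasFDerivAt (fun y : V3 => f (y + fun i => ((n i : ℤ) : ℝ)))
      (fderiv ℝ f (x + fun i => ((n i : ℤ) : ℝ))) x := by
    have := ((hfd _).hasFDerivAt.comp x ((hasFDerivAt_id x).add_const
      (fun i => ((n i : ℤ) : ℝ))))
    exact (by simpa using this : HasFDerivAt (f ∘ fun y => y + fun i => ((n i : ℤ) : ℝ)) (fderiv ℝ f (x + fun i => ((n i : ℤ) : ℝ))) x)
  have h2 : (fun y : V3 => f (y + fun i => ((n i : ℤ) : ℝ))) = f := funext fun y => hper y n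
  rw [h2] at h1
  show pd j f (x + fun i => ((n i : ℤ) : ℝ)) = pd j f x
  unfold pd
  rw [h1.fderiv]

theorem pd_Tw {w : ℝ → ℝ} (hw : Continuous w) {k : Fin 3} {f : V3 → ℝ}
    (hf : ContDiff ℝ (⊤ : ℕ∞) f) (j : Fin 3) :
    pd j (Tw w k f) = Tw w k (pd j f) := by
  funext x
  have hdf : Continuous (fderiv ℝ f) := hf.continuous_fderiv (by simp)
  have hint : IntervalIntegrable (fun t => w t • fderiv ℝ f (x + t • ek k)) volume 0 1 :=
    ((hw.smul (hdf.comp (by fun_prop))).intervalIntegrable 0 1)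
  show fderiv ℝ (Tw w k f) x (Pi.single j 1) = _
  rw [(Tw_hasFDerivAt hw hf x).fderiv,
    ContinuousLinearMap.intervalIntegral_apply hint (Pi.single j 1)]
  simp only [ContinuousLinearMap.smul_apply]
  rfl

/-! ### scalar operators -/

def Pop (k : Fin 3) (f : V3 → ℝ) : V3 → ℝ := Tw (fun _ => 1) k f
def Iop (k : Fin 3) (f : V3 → ℝ) : V3 → ℝ := Tw (fun t => t) k f

structure Nice (f : V3 → ℝ) : Prop where
  cd : ContDiff ℝ (⊤ : ℕ∞) f
  per : SpacePeriodic f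

theorem Nice.cont {f : V3 → ℝ} (hf : Nice f) : Continuous f := hf.cd.continuous

theorem Nice.Pop {f : V3 → ℝ} (hf : Nice f) (k : Fin 3) : Nice (Pop k f) :=
  ⟨Tw_contDiff continuous_const hf.cd, Tw_periodic hf.per⟩

theorem Nice.Iop {f : V3 → ℝ} (hf : Nice f) (k : Fin 3) : Nice (Iop k f) :=
  ⟨Tw_contDiff continuous_id hf.cd, Tw_periodic hf.per⟩

theorem Nice.pd {f : V3 → ℝ} (hf : Nice f) (j : Fin 3) : Nice (pd j f) := by
  constructor
  · have hdf : ContDiff ℝ (⊤ : ℕ∞) (fderiv ℝ f) := (contDiff_infty_iff_fderiv.1 hf.cd).2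
    exact hdf.clm_apply contDiff_const
  · exact pd_periodic hf.cd hf.per j

theorem Nice.add {f g : V3 → ℝ} (hf : Nice f) (hg : Nice g) : Nice (f + g) := by
  refine ⟨hf.cd.add hg.cd, fun x n => ?_⟩
  simp only [Pi.add_apply, hf.per x n, hg.per x n]

theorem Nice.smul {f : V3 → ℝ} (c : ℝ) (hf : Nice f) : Nice (c • f) := by
  refine ⟨hf.cd.const_smul c, fun x n => ?_⟩
  simp only [Pi.smul_apply, hf.per x n]

theorem Nice.neg {f : V3 → ℝ} (hf : Nice f) : Nice (-f) := by
  refine ⟨hf.cd.neg, fun x n => ?_⟩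
  simp only [Pi.neg_apply, hf.per x n]

theorem Nice.sub {f g : V3 → ℝ} (hf : Nice f) (hg : Nice g) : Nice (f - g) := by
  rw [sub_eq_add_neg]; exact hf.add hg.neg

theorem Nice.zero : Nice (0 : V3 → ℝ) := ⟨contDiff_const, fun x n => rfl⟩

theorem pd_Pop {f : V3 → ℝ} (hf : Nice f) (j k : Fin 3) :
    pd j (Pop k f) = Pop k (pd j f) := pd_Tw continuous_const hf.cd j

theorem pd_Iop {f : V3 → ℝ} (hf : Nice f) (j k : Fin 3) :
    pd j (Iop k f) = Iop k (pd j f) := pd_Tw continuous_id hf.cd j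

/-! ### FTC lemmas -/

theorem hasDerivAt_line {f : V3 → ℝ} (hf : ContDiff ℝ (⊤ : ℕ∞) f) (k : Fin 3) (x : V3) (t : ℝ) :
    HasDerivAt (fun s : ℝ => f (x + s • ek k)) (pd k f (x + t • ek k)) t := by
  have hfd : Differentiable ℝ f := hf.differentiable (by simp)
  have hline : HasDerivAt (fun s : ℝ => x + s • ek k) (ek k) t := by
    have h := ((hasDerivAt_id t).smul_const (ek k)).const_add x
    simpa using h
  have := (hfd (x + t • ek k)).hasFDerivAt.comp_hasDerivAt t hline
  exact this

theorem Pop_pd {f : V3 → ℝ} (hf : Nice f) (k : Fin 3) : Pop k (pd k f) = 0 := by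
  funext x
  have hcont : Continuous (fun t : ℝ => pd k f (x + t • ek k)) :=
    (hf.pd k).cont.comp (by fun_prop)
  have h := intervalIntegral.integral_eq_sub_of_hasDerivAt
    (f := fun s : ℝ => f (x + s • ek k)) (fun t _ => hasDerivAt_line hf.cd k x t)
    (hcont.intervalIntegrable 0 1)
  show (∫ t in (0:ℝ)..1, (1:ℝ) • pd k f (x + t • ek k)) = 0
  simp only [one_smul]
  rw [h]
  simp only [one_smul, zero_smul, add_zero]
  rw [hf.per.ek_add k x]
  ring

theorem Iop_pd {f : V3 → ℝ} (hf : Nice f) (k : Fin 3) : Iop k (pd k f) = f - Pop k f := by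
  funext x
  have hcont : Continuous (fun t : ℝ => pd k f (x + t • ek k)) :=
    (hf.pd k).cont.comp (by fun_prop)
  have hcont2 : Continuous (fun t : ℝ => f (x + t • ek k)) := hf.cont.comp (by fun_prop)
  have h2 : ∀ t : ℝ, HasDerivAt (fun s : ℝ => s • f (x + s • ek k))
      (f (x + t • ek k) + t • pd k f (x + t • ek k)) t := by
    intro t
    have := (hasDerivAt_id t).smul (hasDerivAt_line hf.cd k x t)
    exact (by simpa [add_comm] using this : HasDerivAt ((id : ℝ → ℝ) * fun s => f (x + s • ek k)) (f (x + t • ek k) + t * pd k f (x + t • ek k)) t)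
  have hcont3 : Continuous (fun t : ℝ => t • pd k f (x + t • ek k)) := continuous_id.smul hcont
  have h3 := intervalIntegral.integral_eq_sub_of_hasDerivAt (fun t _ => h2 t)
    ((hcont2.add hcont3).intervalIntegrable 0 1)
  rw [intervalIntegral.integral_add (hcont2.intervalIntegrable 0 1)
    (hcont3.intervalIntegrable 0 1)] at h3
  simp only [one_smul, zero_smul, add_zero] at h3
  rw [hf.per.ek_add k x] at h3
  have : (∫ t in (0:ℝ)..1, t • pd k f (x + t • ek k)) = f x - ∫ t in (0:ℝ)..1, f (x + t • ek k) := by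
    linarith [h3]
  show (∫ t in (0:ℝ)..1, t • pd k f (x + t • ek k)) = f x - ∫ t in (0:ℝ)..1, (1:ℝ) • f (x + t • ek k)
  simpa using this

theorem pd_Pop_self {f : V3 → ℝ} (hf : Nice f) (k : Fin 3) : pd k (Pop k f) = 0 := by
  rw [pd_Pop hf k k, Pop_pd hf k]

theorem pd_Iop_self {f : V3 → ℝ} (hf : Nice f) (k : Fin 3) : pd k (Iop k f) = f - Pop k f := by
  rw [pd_Iop hf k k, Iop_pd hf k]

/-! ### linearity -/

theorem Tw_add {w : ℝ → ℝ} (hw : Continuous w) {k : Fin 3} {f g : V3 → ℝ}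
    (hf : Continuous f) (hg : Continuous g) : Tw w k (f + g) = Tw w k f + Tw w k g := by
  funext x
  show (∫ t in (0:ℝ)..1, w t • (f + g) (x + t • ek k)) = _
  simp only [Pi.add_apply, smul_add]
  have hint1 : Continuous fun t : ℝ => w t • f (x + t • ek k) := by fun_prop
  have hint2 : Continuous fun t : ℝ => w t • g (x + t • ek k) := by fun_prop
  rw [intervalIntegral.integral_add (hint1.intervalIntegrable 0 1)
    (hint2.intervalIntegrable 0 1)]
  rfl

theorem Tw_sub {w : ℝ → ℝ} (hw : Continuous w) {k : Fin 3} {f g : V3 → ℝ}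
    (hf : Continuous f) (hg : Continuous g) : Tw w k (f - g) = Tw w k f - Tw w k g := by
  funext x
  show (∫ t in (0:ℝ)..1, w t • (f - g) (x + t • ek k)) = _
  simp only [Pi.sub_apply, smul_sub]
  have hint1 : Continuous fun t : ℝ => w t • f (x + t • ek k) := by fun_prop
  have hint2 : Continuous fun t : ℝ => w t • g (x + t • ek k) := by fun_prop
  rw [intervalIntegral.integral_sub (hint1.intervalIntegrable 0 1)
    (hint2.intervalIntegrable 0 1)]
  rfl

theorem Tw_smul {w : ℝ → ℝ} {k : Fin 3} (c : ℝ) (f : V3 → ℝ) :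
    Tw w k (c • f) = c • Tw w k f := by
  funext x
  show (∫ t in (0:ℝ)..1, w t • (c • f) (x + t • ek k)) = _
  simp only [Pi.smul_apply, smul_comm _ c]
  rw [intervalIntegral.integral_smul]
  rfl

theorem Tw_zero {w : ℝ → ℝ} {k : Fin 3} : Tw w k (0 : V3 → ℝ) = 0 := by
  funext x
  show (∫ t in (0:ℝ)..1, w t • (0:ℝ)) = 0
  simp

theorem pd_add {f g : V3 → ℝ} (hf : Nice f) (hg : Nice g) (j : Fin 3) :
    pd j (f + g) = pd j f + pd j g := by
  funext x
  have h1 : DifferentiableAt ℝ f x := (hf.cd.differentiable (by simp)).differentiableAt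
  have h2 : DifferentiableAt ℝ g x := (hg.cd.differentiable (by simp)).differentiableAt
  show fderiv ℝ (f + g) x (Pi.single j 1) = _
  rw [show f + g = fun y => f y + g y from rfl, fderiv_fun_add h1 h2]
  rfl

theorem pd_sub {f g : V3 → ℝ} (hf : Nice f) (hg : Nice g) (j : Fin 3) :
    pd j (f - g) = pd j f - pd j g := by
  funext x
  have h1 : DifferentiableAt ℝ f x := (hf.cd.differentiable (by simp)).differentiableAt
  have h2 : DifferentiableAt ℝ g x := (hg.cd.differentiable (by simp)).differentiableAt
  show fderiv ℝ (f - g) x (Pi.single j 1) = _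
  rw [show f - g = fun y => f y - g y from rfl, fderiv_fun_sub h1 h2]
  rfl

theorem pd_smul {f : V3 → ℝ} (c : ℝ) (hf : Nice f) (j : Fin 3) :
    pd j (c • f) = c • pd j f := by
  funext x
  have h1 : DifferentiableAt ℝ f x := (hf.cd.differentiable (by simp)).differentiableAt
  show fderiv ℝ (c • f) x (Pi.single j 1) = _
  rw [show c • f = fun y => c • f y from rfl, fderiv_fun_const_smul h1]
  rfl

theorem pd_neg {f : V3 → ℝ} (hf : Nice f) (j : Fin 3) : pd j (-f) = -(pd j f) := by
  have h := pd_smul (-1 : ℝ) hf j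
  simpa using h

theorem pd_zero (j : Fin 3) : pd j (0 : V3 → ℝ) = 0 := by
  funext x
  show fderiv ℝ (0 : V3 → ℝ) x (Pi.single j 1) = 0
  rw [show (0 : V3 → ℝ) = fun _ => (0:ℝ) from rfl, fderiv_fun_const]
  rfl

/-! ### Fubini swap -/

theorem Tw_swap {w w' : ℝ → ℝ} (hw : Continuous w) (hw' : Continuous w') {a b : Fin 3}
    {f : V3 → ℝ} (hf : Continuous f) : Tw w a (Tw w' b f) = Tw w' b (Tw w a f) := by
  funext x
  show (∫ t in (0:ℝ)..1, w t • ∫ s in (0:ℝ)..1, w' s • f ((x + t • ek a) + s • ek b))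
    = ∫ s in (0:ℝ)..1, w' s • ∫ t in (0:ℝ)..1, w t • f ((x + s • ek b) + t • ek a)
  have harr : ∀ (t s : ℝ), (x + t • ek a) + s • ek b = (x + s • ek b) + t • ek a := by
    intro t s; rw [add_right_comm]
  have hC : Continuous (fun p : ℝ × ℝ => w p.1 • w' p.2 • f ((x + p.1 • ek a) + p.2 • ek b)) := by
    fun_prop
  have hInt : Integrable (Function.uncurry
      (fun t s : ℝ => w t • w' s • f ((x + t • ek a) + s • ek b)))
      ((volume.restrict (Ioc (0:ℝ) 1)).prod (volume.restrict (Ioc (0:ℝ) 1))) := by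
    rw [Measure.prod_restrict, ← Measure.volume_eq_prod]
    refine MeasureTheory.IntegrableOn.mono_set ?_
      (Set.prod_mono Set.Ioc_subset_Icc_self Set.Ioc_subset_Icc_self)
    exact hC.continuousOn.integrableOn_compact (isCompact_Icc.prod isCompact_Icc)
  calc (∫ t in (0:ℝ)..1, w t • ∫ s in (0:ℝ)..1, w' s • f ((x + t • ek a) + s • ek b))
      = ∫ t in (0:ℝ)..1, ∫ s in (0:ℝ)..1, w t • w' s • f ((x + t • ek a) + s • ek b) := by
        congr 1; funext t; rw [← intervalIntegral.integral_smul]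
    _ = ∫ t in Ioc (0:ℝ) 1, ∫ s in Ioc (0:ℝ) 1, w t • w' s • f ((x + t • ek a) + s • ek b) := by
        rw [intervalIntegral.integral_of_le zero_le_one]
        congr 1; funext t; rw [intervalIntegral.integral_of_le zero_le_one]
    _ = ∫ s in Ioc (0:ℝ) 1, ∫ t in Ioc (0:ℝ) 1, w t • w' s • f ((x + t • ek a) + s • ek b) :=
        MeasureTheory.integral_integral_swap hInt
    _ = ∫ s in (0:ℝ)..1, ∫ t in (0:ℝ)..1, w t • w' s • f ((x + t • ek a) + s • ek b) := by
        rw [intervalIntegral.integral_of_le zero_le_one]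
        congr 1; funext s; rw [intervalIntegral.integral_of_le zero_le_one]
    _ = ∫ s in (0:ℝ)..1, w' s • ∫ t in (0:ℝ)..1, w t • f ((x + s • ek b) + t • ek a) := by
        congr 1; funext s
        rw [← intervalIntegral.integral_smul]
        congr 1; funext t
        rw [harr t s, smul_comm (w t) (w' s)]

theorem Pop_Pop_comm {f : V3 → ℝ} (hf : Nice f) (a b : Fin 3) :
    Pop a (Pop b f) = Pop b (Pop a f) := Tw_swap continuous_const continuous_const hf.cont

theorem Pop_Iop_comm {f : V3 → ℝ} (hf : Nice f) (a b : Fin 3) :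
    Pop a (Iop b f) = Iop b (Pop a f) := Tw_swap continuous_const continuous_id hf.cont

theorem Iop_Pop_comm {f : V3 → ℝ} (hf : Nice f) (a b : Fin 3) :
    Iop a (Pop b f) = Pop b (Iop a f) := Tw_swap continuous_id continuous_const hf.cont

theorem Iop_Iop_comm {f : V3 → ℝ} (hf : Nice f) (a b : Fin 3) :
    Iop a (Iop b f) = Iop b (Iop a f) := Tw_swap continuous_id continuous_id hf.cont

/-! ### cube and means -/

lemma add_ek_eq_update (x : V3) (k : Fin 3) (t : ℝ) :
    x + t • ek k = Function.update x k (x k + t) := by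
  funext i
  by_cases hik : i = k
  · subst hik; simp [ek]
  · simp [ek, Pi.single_apply, hik, Function.update, dif_neg hik]

lemma update_add_ek (y : V3) (k : Fin 3) (t : ℝ) :
    Function.update y k (t + 1) = Function.update y k t + ek k := by
  funext i
  by_cases hik : i = k
  · subst hik; simp [ek]
  · simp [ek, Pi.single_apply, hik, Function.update, dif_neg hik]

theorem Pop_eq_update {f : V3 → ℝ} (hf : Nice f) (k : Fin 3) (y : V3) :
    Pop k f y = ∫ t in (0:ℝ)..1, f (Function.update y k t) := by
  have hper : Function.Periodic (fun t => f (Function.update y k t)) 1 := by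
    intro t
    show f (Function.update y k (t + 1)) = f (Function.update y k t)
    rw [update_add_ek, hf.per.ek_add k]
  have h1 : Pop k f y = ∫ t in (0:ℝ)..1, f (Function.update y k (y k + t)) := by
    show (∫ t in (0:ℝ)..1, (1:ℝ) • f (y + t • ek k)) = _
    simp only [one_smul, add_ek_eq_update]
  rw [h1]
  rw [intervalIntegral.integral_comp_add_left (fun u => f (Function.update y k u)) (y k)]
  have := hper.intervalIntegral_add_eq (y k) 0
  simpa using this

/-- `∫ t in Icc 0 1 = ∫ t in 0..1` -/
lemma Icc01_eq_interval (g : ℝ → ℝ) :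
    (∫ t in Icc (0:ℝ) 1, g t) = ∫ t in (0:ℝ)..1, g t := by
  rw [intervalIntegral.integral_of_le zero_le_one, integral_Icc_eq_integral_Ioc]

lemma base_fin0 (G : (Fin 0 → ℝ) → ℝ) :
    (∫ z in Icc (0 : Fin 0 → ℝ) 1, G z) = G (fun i => i.elim0) := by
  have huniv : Icc (0 : Fin 0 → ℝ) 1 = Set.univ := by
    apply Set.eq_univ_of_forall
    intro z
    constructor <;> (intro i; exact i.elim0)
  rw [huniv, MeasureTheory.setIntegral_univ, MeasureTheory.integral_unique]
  have : (volume : Measure (Fin 0 → ℝ)) Set.univ = 1 := by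
    rw [MeasureTheory.volume_pi, MeasureTheory.Measure.pi_univ]
    simp
  rw [measureReal_def, this]
  simp
  congr

lemma step_fin (n : ℕ) (F : (Fin (n+1) → ℝ) → ℝ) (hF : Continuous F) :
    (∫ y in Icc (0 : Fin (n+1) → ℝ) 1, F y)
      = ∫ t in Icc (0:ℝ) 1, ∫ z in Icc (0 : Fin n → ℝ) 1, F (Fin.cons t z) := by
  set e := MeasurableEquiv.piFinSuccAbove (fun _ : Fin (n+1) => ℝ) 0 with he
  have hmp : MeasurePreserving e volume volume :=
    MeasureTheory.volume_preserving_piFinSuccAbove (fun _ : Fin (n+1) => ℝ) 0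
  have hemb : MeasurableEmbedding e := e.measurableEmbedding
  have hpre := hmp.setIntegral_preimage_emb hemb
    (fun p : ℝ × (Fin n → ℝ) => F (Fin.cons p.1 p.2))
    ((Icc (0:ℝ) 1) ×ˢ (Icc (0 : Fin n → ℝ) 1))
  have hcons : Continuous (fun p : ℝ × (Fin n → ℝ) => F (Fin.cons p.1 p.2)) := by
    apply hF.comp
    have h0 : Continuous (fun p : ℝ × (Fin n → ℝ) =>
        (Fin.insertNth (0 : Fin (n+1)) p.1 p.2 : Fin (n+1) → ℝ)) :=
      Continuous.finInsertNth (0 : Fin (n+1))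
        (continuous_fst : Continuous (Prod.fst : ℝ × (Fin n → ℝ) → ℝ))
        (continuous_snd : Continuous (Prod.snd : ℝ × (Fin n → ℝ) → (Fin n → ℝ)))
    simpa using h0
  have hs : e ⁻¹' ((Icc (0:ℝ) 1) ×ˢ (Icc (0 : Fin n → ℝ) 1)) = Icc 0 1 := by
    ext x
    simp only [Set.mem_preimage, Set.mem_prod, Set.mem_Icc, he,
      MeasurableEquiv.piFinSuccAbove_apply, Pi.le_def]
    constructor
    · rintro ⟨⟨h1, h2⟩, h3, h4⟩
      constructor
      · intro i
        refine Fin.cases h1 (fun j => ?_) i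
        have := h3 j
        simpa [Fin.removeNth, Fin.succAbove_zero, Fin.tail] using this
      · intro i
        refine Fin.cases h2 (fun j => ?_) i
        have := h4 j
        simpa [Fin.removeNth, Fin.succAbove_zero, Fin.tail] using this
    · rintro ⟨h1, h2⟩
      exact ⟨⟨h1 0, h2 0⟩, fun j => by simpa [Fin.removeNth, Fin.tail] using h1 _,
        fun j => by simpa [Fin.removeNth, Fin.tail] using h2 _⟩
  have hx : ∀ x : Fin (n+1) → ℝ, Fin.cons ((e x).1) ((e x).2) = x := by
    intro x
    funext i
    refine Fin.cases ?_ (fun j => ?_) i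
    · rfl
    · simp [he, MeasurableEquiv.piFinSuccAbove_apply, Fin.removeNth, Fin.succAbove_zero, Fin.tail]
  rw [hs] at hpre
  have hpre2 : (∫ y in Icc (0 : Fin (n+1) → ℝ) 1, F y)
      = ∫ p in (Icc (0:ℝ) 1) ×ˢ (Icc (0 : Fin n → ℝ) 1),
          F (Fin.cons p.1 p.2) := by
    rw [← hpre]
    congr 1
    funext x
    rw [hx x]
  have hint : IntegrableOn (fun p : ℝ × (Fin n → ℝ) => F (Fin.cons p.1 p.2))
      ((Icc (0:ℝ) 1) ×ˢ (Icc (0 : Fin n → ℝ) 1)) (volume.prod volume) := by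
    rw [← MeasureTheory.Measure.volume_eq_prod]
    exact hcons.continuousOn.integrableOn_compact ((isCompact_Icc).prod isCompact_Icc)
  rw [hpre2, MeasureTheory.Measure.volume_eq_prod, MeasureTheory.setIntegral_prod _ hint]

lemma cont_cons {n : ℕ} (t : ℝ) :
    Continuous (fun z : Fin n → ℝ => (Fin.cons t z : Fin (n+1) → ℝ)) := by
  have h0 : Continuous (fun z : Fin n → ℝ =>
      (Fin.insertNth (0 : Fin (n+1)) t z : Fin (n+1) → ℝ)) :=
    Continuous.finInsertNth (0 : Fin (n+1)) continuous_const continuous_id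
  simpa using h0

theorem cube_iterated {F : V3 → ℝ} (hF : Continuous F) :
    (∫ y in cube, F y)
      = ∫ t0 in (0:ℝ)..1, ∫ t1 in (0:ℝ)..1, ∫ t2 in (0:ℝ)..1,
          F (Fin.cons t0 (Fin.cons t1 (Fin.cons t2 (fun i => i.elim0)))) := by
  have step2 := step_fin 2 F hF
  have step1 : ∀ t0 : ℝ, (∫ z in Icc (0 : Fin 2 → ℝ) 1, F (Fin.cons t0 z))
      = ∫ t1 in Icc (0:ℝ) 1, ∫ z in Icc (0 : Fin 1 → ℝ) 1, F (Fin.cons t0 (Fin.cons t1 z)) :=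
    fun t0 => step_fin 1 (fun z => F (Fin.cons t0 z)) (hF.comp (cont_cons t0))
  have step0 : ∀ t0 t1 : ℝ, (∫ z in Icc (0 : Fin 1 → ℝ) 1, F (Fin.cons t0 (Fin.cons t1 z)))
      = ∫ t2 in Icc (0:ℝ) 1, ∫ z in Icc (0 : Fin 0 → ℝ) 1,
          F (Fin.cons t0 (Fin.cons t1 (Fin.cons t2 z))) :=
    fun t0 t1 => step_fin 0 (fun z => F (Fin.cons t0 (Fin.cons t1 z)))
      ((hF.comp (cont_cons t0)).comp (cont_cons t1))
  have base : ∀ t0 t1 t2 : ℝ, (∫ z in Icc (0 : Fin 0 → ℝ) 1,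
      F (Fin.cons t0 (Fin.cons t1 (Fin.cons t2 z))))
      = F (Fin.cons t0 (Fin.cons t1 (Fin.cons t2 (fun i => i.elim0)))) :=
    fun t0 t1 t2 => base_fin0 (fun z => F (Fin.cons t0 (Fin.cons t1 (Fin.cons t2 z))))
  show (∫ y in Icc (0:V3) 1, F y) = _
  rw [step2]
  rw [Icc01_eq_interval]
  congr 1
  funext t0
  rw [step1 t0, Icc01_eq_interval]
  congr 1
  funext t1
  rw [step0 t0 t1, Icc01_eq_interval]
  congr 1
  funext t2
  exact base t0 t1 t2

lemma triple_update (x : V3) (t0 t1 t2 : ℝ) :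
    Function.update (Function.update (Function.update x 0 t0) 1 t1) 2 t2
      = Fin.cons t0 (Fin.cons t1 (Fin.cons t2 (fun i => i.elim0))) := by
  funext i
  fin_cases i <;> simp [Function.update] <;> rfl

theorem Pop012 {f : V3 → ℝ} (hf : Nice f) (x : V3) :
    Pop 0 (Pop 1 (Pop 2 f)) x = ∫ y in cube, f y := by
  rw [cube_iterated hf.cont]
  rw [Pop_eq_update ((hf.Pop 2).Pop 1) 0 x]
  congr 1
  funext t0
  rw [Pop_eq_update (hf.Pop 2) 1 _]
  congr 1
  funext t1
  rw [Pop_eq_update hf 2 _]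
  congr 1
  funext t2
  rw [triple_update]

theorem Pop3_zero {f : V3 → ℝ} (hf : Nice f) (hm : (∫ y in cube, f y) = 0)
    (a b c : Fin 3) (hab : a ≠ b) (hac : a ≠ c) (hbc : b ≠ c) :
    Pop a (Pop b (Pop c f)) = 0 := by
  have base : Pop 0 (Pop 1 (Pop 2 f)) = 0 := by
    funext x; rw [Pop012 hf x, hm]; rfl
  have sw_in : ∀ p q : Fin 3, Pop p (Pop q f) = Pop q (Pop p f) := fun p q => Pop_Pop_comm hf p q
  have sw_out : ∀ p q r : Fin 3, Pop p (Pop q (Pop r f)) = Pop q (Pop p (Pop r f)) :=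
    fun p q r => Pop_Pop_comm (hf.Pop r) p q
  fin_cases a <;> fin_cases b <;> fin_cases c <;>
    [ exact absurd rfl hab; exact absurd rfl hab; exact absurd rfl hab;
      exact absurd rfl hac; exact absurd rfl hbc; exact base;
      exact absurd rfl hac; (show Pop 0 (Pop 2 (Pop 1 f)) = 0; rw [sw_in 2 1]; exact base); exact absurd rfl hbc;
      exact absurd rfl hbc; exact absurd rfl hac; (show Pop 1 (Pop 0 (Pop 2 f)) = 0; rw [sw_out 1 0 2]; exact base);
      exact absurd rfl hab; exact absurd rfl hab; exact absurd rfl hab;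
      (show Pop 1 (Pop 2 (Pop 0 f)) = 0; rw [sw_in 2 0, sw_out 1 0 2]; exact base); exact absurd rfl hac; exact absurd rfl hbc;
      exact absurd rfl hbc; (show Pop 2 (Pop 0 (Pop 1 f)) = 0; rw [sw_out 2 0 1, sw_in 2 1]; exact base); exact absurd rfl hac;
      (show Pop 2 (Pop 1 (Pop 0 f)) = 0; rw [sw_out 2 1 0, sw_in 2 0, sw_out 1 0 2]; exact base); exact absurd rfl hbc;
      exact absurd rfl hac;
      exact absurd rfl hab; exact absurd rfl hab; exact absurd rfl hab]

/-! ### specialized linearity -/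

theorem Pop_add {f g : V3 → ℝ} (hf : Continuous f) (hg : Continuous g) (k : Fin 3) :
    Pop k (f + g) = Pop k f + Pop k g := Tw_add continuous_const hf hg
theorem Pop_sub {f g : V3 → ℝ} (hf : Continuous f) (hg : Continuous g) (k : Fin 3) :
    Pop k (f - g) = Pop k f - Pop k g := Tw_sub continuous_const hf hg
theorem Pop_smul (c : ℝ) (f : V3 → ℝ) (k : Fin 3) : Pop k (c • f) = c • Pop k f := Tw_smul c f
theorem Pop_zero (k : Fin 3) : Pop k (0 : V3 → ℝ) = 0 := Tw_zero
theorem Iop_add {f g : V3 → ℝ} (hf : Continuous f) (hg : Continuous g) (k : Fin 3) :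
    Iop k (f + g) = Iop k f + Iop k g := Tw_add continuous_id hf hg
theorem Iop_sub {f g : V3 → ℝ} (hf : Continuous f) (hg : Continuous g) (k : Fin 3) :
    Iop k (f - g) = Iop k f - Iop k g := Tw_sub continuous_id hf hg
theorem Iop_smul (c : ℝ) (f : V3 → ℝ) (k : Fin 3) : Iop k (c • f) = c • Iop k f := Tw_smul c f
theorem Iop_zero (k : Fin 3) : Iop k (0 : V3 → ℝ) = 0 := Tw_zero

/-! ### the construction -/

def vc (v : V3 → V3) (i : Fin 3) : V3 → ℝ := fun x => v x i

def aa (v : V3 → V3) (K I J : Fin 3) : V3 → ℝ :=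
  (2⁻¹ : ℝ) • (Pop K (vc v I) - Iop I (Pop K (pd J (vc v J))))

def rr (v : V3 → V3) (i j k : Fin 3) : V3 → ℝ :=
  (2⁻¹ : ℝ) • (Iop j (vc v i) + Iop i (vc v j) - Iop i (Iop j (pd k (vc v k))))

def Rdiag (v : V3 → V3) (i j k : Fin 3) : V3 → ℝ :=
  Iop i (aa v j i k) + Iop i (aa v k i j) - Iop j (aa v i j k) - Iop k (aa v i k j)

def Rod (v : V3 → V3) (i j k : Fin 3) : V3 → ℝ :=
  rr v i j k + Iop j (Pop i (aa v k i j)) + Iop i (Pop j (aa v k j i))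

section Main

variable {v : V3 → V3}

theorem Naa (hN : ∀ m, Nice (vc v m)) (K I J : Fin 3) : Nice (aa v K I J) :=
  (((hN I).Pop K).sub ((((hN J).pd J).Pop K).Iop I)).smul 2⁻¹

theorem Nrr (hN : ∀ m, Nice (vc v m)) (i j k : Fin 3) : Nice (rr v i j k) :=
  ((((hN i).Iop j).add ((hN j).Iop i)).sub ((((hN k).pd k).Iop j).Iop i)).smul 2⁻¹

theorem NRdiag (hN : ∀ m, Nice (vc v m)) (i j k : Fin 3) : Nice (Rdiag v i j k) :=
  ((((Naa hN j i k).Iop i).add ((Naa hN k i j).Iop i)).sub ((Naa hN i j k).Iop j)).sub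
    ((Naa hN i k j).Iop k)

theorem NRod (hN : ∀ m, Nice (vc v m)) (i j k : Fin 3) : Nice (Rod v i j k) :=
  (((Nrr hN i j k).add (((Naa hN k i j).Pop i).Iop j))).add (((Naa hN k j i).Pop j).Iop i)

theorem pd_aa_self (hN : ∀ m, Nice (vc v m)) (K I J : Fin 3) : pd K (aa v K I J) = 0 := by
  unfold aa
  rw [pd_smul _ (((hN I).Pop K).sub ((((hN J).pd J).Pop K).Iop I)) K,
    pd_sub ((hN I).Pop K) ((((hN J).pd J).Pop K).Iop I) K,
    pd_Pop_self (hN I) K,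
    pd_Iop ((((hN J).pd J).Pop K)) K I,
    pd_Pop_self ((hN J).pd J) K, Iop_zero]
  funext x
  simp

theorem STR {g h : V3 → ℝ} (hg : Nice g) (hh : Nice h) (i j : Fin 3)
    (hgm : Pop j (Pop i g) = 0) :
    pd i (Iop i g) + pd j (Iop j (Pop i g)) + pd j (Iop i (Pop j h)) = g := by
  rw [pd_Iop_self hg i, pd_Iop_self (hg.Pop i) j, hgm,
    pd_Iop (hh.Pop j) j i, pd_Pop_self hh j, Iop_zero]
  funext x
  simp only [Pi.add_apply, Pi.sub_apply, Pi.zero_apply]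
  ring

theorem MC (hN : ∀ m, Nice (vc v m))
    (hm3 : ∀ m (a b c : Fin 3), a ≠ b → a ≠ c → b ≠ c → Pop a (Pop b (Pop c (vc v m))) = 0)
    {K I J : Fin 3} (hKI : K ≠ I) (hKJ : K ≠ J) (hIJ : I ≠ J) :
    Pop J (Pop I (aa v K I J)) = 0 := by
  have hZ : Nice (pd J (vc v J)) := (hN J).pd J
  have hZK : Nice (Pop K (pd J (vc v J))) := hZ.Pop K
  have e1 : Pop I (aa v K I J)
      = (2⁻¹ : ℝ) • (Pop I (Pop K (vc v I)) - Pop I (Iop I (Pop K (pd J (vc v J))))) := by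
    unfold aa
    rw [Pop_smul, Pop_sub ((hN I).Pop K).cont (hZK.Iop I).cont]
  rw [e1, Pop_smul, Pop_sub (((hN I).Pop K).Pop I).cont ((hZK.Iop I).Pop I).cont]
  have t1 : Pop J (Pop I (Pop K (vc v I))) = 0 :=
    hm3 I J I K (Ne.symm hIJ) (Ne.symm hKJ) (Ne.symm hKI)
  have t2 : Pop J (Pop I (Iop I (Pop K (pd J (vc v J))))) = 0 := by
    rw [Pop_Pop_comm (hZK.Iop I) J I, Pop_Iop_comm hZK J I, Pop_Pop_comm hZ J K,
      Pop_pd (hN J) J, Pop_zero, Iop_zero, Pop_zero]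
  rw [t1, t2]
  funext x
  simp

theorem GENR (hN : ∀ m, Nice (vc v m)) (i j k : Fin 3) :
    pd j (rr v i j k) + pd k (rr v i k j) = vc v i - aa v j i k - aa v k i j := by
  have Ni := hN i; have Nj := hN j; have Nk := hN k
  have h1 : pd j (rr v i j k)
      = (2⁻¹ : ℝ) • ((vc v i - Pop j (vc v i)) + Iop i (pd j (vc v j))
          - (Iop i (pd k (vc v k)) - Iop i (Pop j (pd k (vc v k))))) := by
    unfold rr
    rw [pd_smul _ (((Ni.Iop j).add (Nj.Iop i)).sub (((Nk.pd k).Iop j).Iop i)) j,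
      pd_sub ((Ni.Iop j).add (Nj.Iop i)) (((Nk.pd k).Iop j).Iop i) j,
      pd_add (Ni.Iop j) (Nj.Iop i) j,
      pd_Iop_self Ni j, pd_Iop Nj j i,
      pd_Iop ((Nk.pd k).Iop j) j i, pd_Iop_self (Nk.pd k) j,
      Iop_sub (Nk.pd k).cont ((Nk.pd k).Pop j).cont]
  have h2 : pd k (rr v i k j)
      = (2⁻¹ : ℝ) • ((vc v i - Pop k (vc v i)) + Iop i (pd k (vc v k))
          - (Iop i (pd j (vc v j)) - Iop i (Pop k (pd j (vc v j))))) := by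
    unfold rr
    rw [pd_smul _ (((Ni.Iop k).add (Nk.Iop i)).sub (((Nj.pd j).Iop k).Iop i)) k,
      pd_sub ((Ni.Iop k).add (Nk.Iop i)) (((Nj.pd j).Iop k).Iop i) k,
      pd_add (Ni.Iop k) (Nk.Iop i) k,
      pd_Iop_self Ni k, pd_Iop Nk k i,
      pd_Iop ((Nj.pd j).Iop k) k i, pd_Iop_self (Nj.pd j) k,
      Iop_sub (Nj.pd j).cont ((Nj.pd j).Pop k).cont]
  rw [h1, h2]
  unfold aa
  funext x
  simp only [Pi.add_apply, Pi.sub_apply, Pi.smul_apply, smul_eq_mul]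
  ring

theorem comp_eq (hN : ∀ m, Nice (vc v m))
    (hm3 : ∀ m (a b c : Fin 3), a ≠ b → a ≠ c → b ≠ c → Pop a (Pop b (Pop c (vc v m))) = 0)
    (i j k : Fin 3) (hij : i ≠ j) (hik : i ≠ k) (hjk : j ≠ k) :
    pd i (Rdiag v i j k) + pd j (Rod v i j k) + pd k (Rod v i k j) = vc v i := by
  have X1 : pd i (Rdiag v i j k)
      = pd i (Iop i (aa v j i k)) + pd i (Iop i (aa v k i j))
        - pd i (Iop j (aa v i j k)) - pd i (Iop k (aa v i k j)) := by
    unfold Rdiag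
    rw [pd_sub ((((Naa hN j i k).Iop i).add ((Naa hN k i j).Iop i)).sub ((Naa hN i j k).Iop j))
        ((Naa hN i k j).Iop k) i,
      pd_sub (((Naa hN j i k).Iop i).add ((Naa hN k i j).Iop i)) ((Naa hN i j k).Iop j) i,
      pd_add ((Naa hN j i k).Iop i) ((Naa hN k i j).Iop i) i]
  have X2 : pd j (Rod v i j k)
      = pd j (rr v i j k) + pd j (Iop j (Pop i (aa v k i j)))
        + pd j (Iop i (Pop j (aa v k j i))) := by
    unfold Rod
    rw [pd_add ((Nrr hN i j k).add (((Naa hN k i j).Pop i).Iop j))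
        (((Naa hN k j i).Pop j).Iop i) j,
      pd_add (Nrr hN i j k) (((Naa hN k i j).Pop i).Iop j) j]
  have X3 : pd k (Rod v i k j)
      = pd k (rr v i k j) + pd k (Iop k (Pop i (aa v j i k)))
        + pd k (Iop i (Pop k (aa v j k i))) := by
    unfold Rod
    rw [pd_add ((Nrr hN i k j).add (((Naa hN j i k).Pop i).Iop k))
        (((Naa hN j k i).Pop k).Iop i) k,
      pd_add (Nrr hN i k j) (((Naa hN j i k).Pop i).Iop k) k]
  have D1 : pd i (Iop j (aa v i j k)) = 0 := by
    rw [pd_Iop (Naa hN i j k) i j, pd_aa_self hN i j k, Iop_zero]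
  have D2 : pd i (Iop k (aa v i k j)) = 0 := by
    rw [pd_Iop (Naa hN i k j) i k, pd_aa_self hN i k j, Iop_zero]
  have Sk := STR (Naa hN k i j) (Naa hN k j i) i j
    (MC hN hm3 (Ne.symm hik) (Ne.symm hjk) hij)
  have Sj := STR (Naa hN j i k) (Naa hN j k i) i k
    (MC hN hm3 (Ne.symm hij) hjk hik)
  have G := GENR hN i j k
  rw [X1, X2, X3, D1, D2]
  funext x
  have sk := congrFun Sk x
  have sj := congrFun Sj x
  have g := congrFun G x
  simp only [Pi.add_apply, Pi.sub_apply, Pi.zero_apply] at sk sj g ⊢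
  linarith

theorem rr_symm (hN : ∀ m, Nice (vc v m)) (i j k : Fin 3) : rr v i j k = rr v j i k := by
  unfold rr
  rw [Iop_Iop_comm ((hN k).pd k) i j]
  funext x
  simp only [Pi.add_apply, Pi.sub_apply, Pi.smul_apply, smul_eq_mul]
  ring

theorem Rod_symm (hN : ∀ m, Nice (vc v m)) (i j k : Fin 3) : Rod v i j k = Rod v j i k := by
  unfold Rod
  rw [rr_symm hN i j k]
  funext x
  simp only [Pi.add_apply]
  ring

end Main


/-- Symmetric inverse divergence: every smooth mean-zero vector field `v`
on the torus is the divergence of a smooth symmetric trace-free matrix field. -/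
theorem symmetric_tracefree_inverse_divergence
    (v : V3 → V3) (hv : ContDiff ℝ (⊤ : ℕ∞) v) (hper : SpacePeriodic v)
    (hmean : (∫ x in cube, v x) = 0) :
    ∃ R : V3 → Mat3, ContDiff ℝ (⊤ : ℕ∞) R ∧ SpacePeriodic R ∧
      (∀ x, ∀ i j, R x i j = R x j i) ∧
      (∀ x, ∑ i, R x i i = 0) ∧
      (∀ x, ∀ i, divM R x i = v x i) := by
  have hN : ∀ m, Nice (vc v m) :=
    fun m => ⟨(contDiff_pi.1 hv) m, fun x n => congrFun (hper x n) m⟩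
  have hint : IntegrableOn v cube volume :=
    hv.continuous.continuousOn.integrableOn_compact isCompact_Icc
  have hm_i : ∀ m, (∫ y in cube, vc v m y) = 0 := by
    intro m
    have h := (ContinuousLinearMap.proj (R := ℝ) (φ := fun _ : Fin 3 => ℝ) m).integral_comp_comm
      hint
    rw [hmean] at h
    simpa [vc] using h
  have hm3 : ∀ m (a b c : Fin 3), a ≠ b → a ≠ c → b ≠ c →
      Pop a (Pop b (Pop c (vc v m))) = 0 :=
    fun m a b c hab hac hbc => Pop3_zero (hN m) (hm_i m) a b c hab hac hbc
  refine ⟨fun x => ![![Rdiag v 0 1 2 x, Rod v 0 1 2 x, Rod v 0 2 1 x],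
                    ![Rod v 0 1 2 x, Rdiag v 1 0 2 x, Rod v 1 2 0 x],
                    ![Rod v 0 2 1 x, Rod v 1 2 0 x, Rdiag v 2 0 1 x]], ?_, ?_, ?_, ?_, ?_⟩
  · apply contDiff_pi.2
    intro m
    apply contDiff_pi.2
    intro p
    fin_cases m <;> fin_cases p
    · exact (NRdiag hN 0 1 2).cd
    · exact (NRod hN 0 1 2).cd
    · exact (NRod hN 0 2 1).cd
    · exact (NRod hN 0 1 2).cd
    · exact (NRdiag hN 1 0 2).cd
    · exact (NRod hN 1 2 0).cd
    · exact (NRod hN 0 2 1).cd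
    · exact (NRod hN 1 2 0).cd
    · exact (NRdiag hN 2 0 1).cd
  · intro x n
    funext m p
    fin_cases m <;> fin_cases p
    · exact (NRdiag hN 0 1 2).per x n
    · exact (NRod hN 0 1 2).per x n
    · exact (NRod hN 0 2 1).per x n
    · exact (NRod hN 0 1 2).per x n
    · exact (NRdiag hN 1 0 2).per x n
    · exact (NRod hN 1 2 0).per x n
    · exact (NRod hN 0 2 1).per x n
    · exact (NRod hN 1 2 0).per x n
    · exact (NRdiag hN 2 0 1).per x n
  · intro x i j
    fin_cases i <;> fin_cases j <;> rfl
  · intro x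
    rw [Fin.sum_univ_three]
    show Rdiag v 0 1 2 x + Rdiag v 1 0 2 x + Rdiag v 2 0 1 x = 0
    unfold Rdiag
    simp only [Pi.add_apply, Pi.sub_apply]
    ring
  · intro x i
    unfold divM
    rw [Fin.sum_univ_three]
    fin_cases i
    · show pd 0 (Rdiag v 0 1 2) x + pd 1 (Rod v 0 1 2) x + pd 2 (Rod v 0 2 1) x = v x 0
      have h := congrFun (comp_eq hN hm3 0 1 2 (by decide) (by decide) (by decide)) x
      simp only [Pi.add_apply] at h
      have : vc v 0 x = v x 0 := rfl
      linarith [h]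
    · show pd 0 (Rod v 0 1 2) x + pd 1 (Rdiag v 1 0 2) x + pd 2 (Rod v 1 2 0) x = v x 1
      have h := congrFun (comp_eq hN hm3 1 0 2 (by decide) (by decide) (by decide)) x
      rw [Rod_symm hN 1 0 2] at h
      simp only [Pi.add_apply] at h
      have : vc v 1 x = v x 1 := rfl
      linarith [h]
    · show pd 0 (Rod v 0 2 1) x + pd 1 (Rod v 1 2 0) x + pd 2 (Rdiag v 2 0 1) x = v x 2
      have h := congrFun (comp_eq hN hm3 2 0 1 (by decide) (by decide) (by decide)) x
      rw [Rod_symm hN 2 0 1, Rod_symm hN 2 1 0] at h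
      simp only [Pi.add_apply] at h
      have : vc v 2 x = v x 2 := rfl
      linarith [h]

end
end
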